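/- In the algebra H, the images of the monomials g^i x^j y^ℓ with 0 ≤ i, j, ℓ ≤ p − 1 form a k-basis of H; in particular dim_k H = p³. -/

import Mathlib

noncomputable section

namespace JordanBos

variable (k : Type*) [Field k]

/-- Generators: `x = ι 0`, `y = ι 1`, `g = ι 2`. -/
def X : FreeAlgebra k (Fin 3) := FreeAlgebra.ι k (0 : Fin 3)
def Y : FreeAlgebra k (Fin 3) := FreeAlgebra.ι k (1 : Fin 3)
def G : FreeAlgebra k (Fin 3) := FreeAlgebra.ι k (2 : Fin 3)

/-- The defining relations of `H = B(V(1,2)) # kΓ`: the elements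
`x^p`, `y^p`, `g^p − 1`, `gx − xg`, `gy − yg − xg`, `yx − xy + (1/2)x²`
are set to `0`; `RingQuot` of this relation is the quotient by the two-sided
ideal they generate. -/
def rel (p : ℕ) : FreeAlgebra k (Fin 3) → FreeAlgebra k (Fin 3) → Prop :=
  fun a b =>
    (a = (X k) ^ p ∨ a = (Y k) ^ p ∨ a = (G k) ^ p - 1 ∨
      a = G k * X k - X k * G k ∨
      a = G k * Y k - Y k * G k - X k * G k ∨
      a = Y k * X k - X k * Y k + (2⁻¹ : k) • (X k) ^ 2) ∧ b = 0

/-- The Hopf algebra `H`. -/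
def H (p : ℕ) := RingQuot (rel k p)

instance (p : ℕ) : Ring (H k p) := inferInstanceAs (Ring (RingQuot (rel k p)))

instance (p : ℕ) : Algebra k (H k p) :=
  inferInstanceAs (Algebra k (RingQuot (rel k p)))

def xH (p : ℕ) : H k p := RingQuot.mkAlgHom k (rel k p) (X k)
def yH (p : ℕ) : H k p := RingQuot.mkAlgHom k (rel k p) (Y k)
def gH (p : ℕ) : H k p := RingQuot.mkAlgHom k (rel k p) (G k)

end JordanBos

/-!
The monomials `g^i x^j y^l` span `H`: their span contains `1` and is stable under left
multiplication by the generators, because `g^p = 1`, `x^p = y^p = 0` and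
`y g^i x^j y^l = g^i x^j y^(l+1) - (i + j/2) g^i x^(j+1) y^l`.

For independence, the same formulas, read on a vector space with basis `e(i, j, l)`
(`i ∈ ℤ/p`, `j, l < p`), define operators `g, x, y`: a model of the left regular representation.
They satisfy the defining relations; `y^p = 0` holds because `y` is the difference of two
commuting nilpotent shifts and `char k = p`. So `H` acts, and `g^i x^j y^l` sends `e(0, 0, 0)` to
`e(i, j, l)`.
-/

open JordanBos

theorem Submodule.span_eq_top_of_mul_mem {R A : Type*} [CommSemiring R] [Semiring A]
    [Algebra R A] {s t : Set A} (hs : Algebra.adjoin R s = ⊤)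
    (h1 : (1 : A) ∈ Submodule.span R t)
    (hmul : ∀ a ∈ s, ∀ v ∈ t, a * v ∈ Submodule.span R t) : Submodule.span R t = ⊤ := by
  set S := Submodule.span R t
  have hmul' : ∀ a ∈ s, ∀ v ∈ S, a * v ∈ S := fun a ha =>
    Submodule.span_le (p := S.comap (LinearMap.mulLeft R a)) |>.mpr (hmul a ha)
  refine Submodule.eq_top_iff'.mpr fun a => ?_
  have key : ∀ v ∈ S, a * v ∈ S := by
    have ha : a ∈ Algebra.adjoin R s := hs ▸ Algebra.mem_top
    induction ha using Algebra.adjoin_induction with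
    | mem a ha => exact hmul' a ha
    | algebraMap r => exact fun v hv => (Algebra.smul_def r v).symm ▸ S.smul_mem r hv
    | add a b _ _ ha hb =>
      exact fun v hv => (add_mul a b v).symm ▸ S.add_mem (ha v hv) (hb v hv)
    | mul a b _ _ ha hb => exact fun v hv => (mul_assoc a b v).symm ▸ ha _ (hb v hv)
  simpa using key 1 h1

def orderedMonomial {A : Type*} [Monoid A] (p : ℕ) (g x y : A) : Fin p × Fin p × Fin p → A :=
  fun m => g ^ (m.1 : ℕ) * x ^ (m.2.1 : ℕ) * y ^ (m.2.2 : ℕ)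

lemma map_orderedMonomial {A B F : Type*} [Monoid A] [Monoid B] [FunLike F A B]
    [MonoidHomClass F A B] (f : F) (p : ℕ) (g x y : A) (m : Fin p × Fin p × Fin p) :
    f (orderedMonomial p g x y m) = orderedMonomial p (f g) (f x) (f y) m := by
  simp only [orderedMonomial, map_mul, map_pow]

section

variable (k : Type*) [Field k]

structure JordanRelations {A : Type*} [Ring A] [Algebra k A] (p : ℕ) (g x y : A) : Prop where
  x_pow : x ^ p = 0
  y_pow : y ^ p = 0
  g_pow : g ^ p = 1
  g_mul_x : g * x = x * g
  g_mul_y : g * y = y * g + x * g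
  y_mul_x : y * x = x * y - (2⁻¹ : k) • x ^ 2

namespace JordanRelations

variable {k} {p : ℕ}

section Lift

variable {B : Type*} [Ring B] [Algebra k B] {g x y : B}

def lift (h : JordanRelations k p g x y) : H k p →ₐ[k] B :=
  RingQuot.liftAlgHom k ⟨FreeAlgebra.lift k ![x, y, g], by
    rintro a b ⟨ha, rfl⟩
    rcases ha with rfl | rfl | rfl | rfl | rfl | rfl <;>
      simp [X, Y, G, h.x_pow, h.y_pow, h.g_pow, h.g_mul_x, h.g_mul_y, h.y_mul_x]⟩

variable (h : JordanRelations k p g x y)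

@[simp] lemma lift_xH : h.lift (xH k p) = x :=
  (RingQuot.liftAlgHom_mkAlgHom_apply k _ _ _).trans (FreeAlgebra.lift_ι_apply _ _)

@[simp] lemma lift_yH : h.lift (yH k p) = y :=
  (RingQuot.liftAlgHom_mkAlgHom_apply k _ _ _).trans (FreeAlgebra.lift_ι_apply _ _)

@[simp] lemma lift_gH : h.lift (gH k p) = g :=
  (RingQuot.liftAlgHom_mkAlgHom_apply k _ _ _).trans (FreeAlgebra.lift_ι_apply _ _)

end Lift

variable {A : Type*} [Ring A] [Algebra k A] {g x y : A}

lemma y_mul_g_pow (h : JordanRelations k p g x y) (i : ℕ) :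
    y * g ^ i = g ^ i * y - (i : k) • (g ^ i * x) := by
  induction i with
  | zero => simp
  | succ i ih =>
    have hyg : y * g = g * y - x * g := by rw [h.g_mul_y]; abel
    have hxg : x * g = g * x := h.g_mul_x.symm
    rw [pow_succ, ← mul_assoc, ih, sub_mul, mul_assoc, hyg, smul_mul_assoc, mul_assoc, hxg,
      mul_sub, ← mul_assoc, ← mul_assoc, ← pow_succ, Nat.cast_succ, add_smul, one_smul]
    abel

lemma y_mul_x_pow (h : JordanRelations k p g x y) (j : ℕ) :
    y * x ^ j = x ^ j * y - ((j : k) * 2⁻¹) • x ^ (j + 1) := by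
  induction j with
  | zero => simp
  | succ j ih =>
    rw [pow_succ, ← mul_assoc, ih, sub_mul, mul_assoc, h.y_mul_x, smul_mul_assoc, mul_sub,
      mul_smul_comm, ← mul_assoc, ← pow_succ, ← pow_succ, ← pow_add, Nat.cast_succ, add_mul,
      one_mul, add_smul]
    abel

lemma y_mul_monomial (h : JordanRelations k p g x y) (i j l : ℕ) :
    y * (g ^ i * x ^ j * y ^ l) =
      g ^ i * x ^ j * y ^ (l + 1) - ((i : k) + j * 2⁻¹) • (g ^ i * x ^ (j + 1) * y ^ l) := by
  have hxg : x * g ^ i = g ^ i * x := (Commute.pow_left h.g_mul_x i).symm.eq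
  rw [← mul_assoc, ← mul_assoc, h.y_mul_g_pow, sub_mul, sub_mul, mul_assoc (g ^ i) y,
    h.y_mul_x_pow, smul_mul_assoc, smul_mul_assoc, mul_assoc (g ^ i) x, ← pow_succ', mul_sub,
    sub_mul, mul_smul_comm, smul_mul_assoc, ← mul_assoc, mul_assoc _ y, ← pow_succ', add_smul]
  abel

lemma pow_mul_pow_mul_pow_mem_span (h : JordanRelations k p g x y) [NeZero p] (i j l : ℕ) :
    g ^ i * x ^ j * y ^ l ∈ Submodule.span k (Set.range (orderedMonomial p g x y)) := by
  rcases lt_or_ge j p with hj | hj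
  · rcases lt_or_ge l p with hl | hl
    · refine Submodule.subset_span
        ⟨(⟨i % p, Nat.mod_lt i (NeZero.pos p)⟩, ⟨j, hj⟩, ⟨l, hl⟩), ?_⟩
      simp only [orderedMonomial, ← pow_eq_pow_mod i h.g_pow]
    · simp [pow_eq_zero_of_le hl h.y_pow]
  · simp [pow_eq_zero_of_le hj h.x_pow]

theorem span_orderedMonomial_eq_top (h : JordanRelations k p g x y) [NeZero p]
    (hgen : Algebra.adjoin k {g, x, y} = ⊤) :
    Submodule.span k (Set.range (orderedMonomial p g x y)) = ⊤ := by
  refine Submodule.span_eq_top_of_mul_mem hgen ?_ ?_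
  · simpa using h.pow_mul_pow_mul_pow_mem_span 0 0 0
  rintro a ha _ ⟨⟨i, j, l⟩, rfl⟩
  simp only [orderedMonomial]
  rcases ha with rfl | rfl | rfl
  · rw [← mul_assoc, ← mul_assoc, ← pow_succ']
    exact h.pow_mul_pow_mul_pow_mem_span _ _ _
  · rw [← mul_assoc, ← mul_assoc, (Commute.pow_left h.g_mul_x i).symm.eq, mul_assoc _ a,
      ← pow_succ']
    exact h.pow_mul_pow_mul_pow_mem_span _ _ _
  · rw [h.y_mul_monomial]
    exact sub_mem (h.pow_mul_pow_mul_pow_mem_span _ _ _)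
      (Submodule.smul_mem _ _ (h.pow_mul_pow_mul_pow_mem_span _ _ _))

end JordanRelations

theorem jordanRelations_H (p : ℕ) : JordanRelations k p (gH k p) (xH k p) (yH k p) := by
  let mk : FreeAlgebra k (Fin 3) →ₐ[k] H k p := RingQuot.mkAlgHom k (rel k p)
  have hrel : ∀ a, rel k p a 0 → mk a = 0 := fun a ha =>
    (RingQuot.mkAlgHom_rel k ha).trans (map_zero _)
  change JordanRelations k p (mk (G k)) (mk (X k)) (mk (Y k))
  refine ⟨?_, ?_, ?_, ?_, ?_, ?_⟩
  · simpa using hrel _ ⟨.inl rfl, rfl⟩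
  · simpa using hrel _ ⟨.inr <| .inl rfl, rfl⟩
  · simpa [sub_eq_zero] using hrel _ ⟨.inr <| .inr <| .inl rfl, rfl⟩
  · simpa [sub_eq_zero] using hrel _ ⟨.inr <| .inr <| .inr <| .inl rfl, rfl⟩
  · simpa [sub_eq_zero, sub_sub] using hrel _ ⟨.inr <| .inr <| .inr <| .inr <| .inl rfl, rfl⟩
  · simpa [sub_eq_zero, sub_add] using hrel _ ⟨.inr <| .inr <| .inr <| .inr <| .inr rfl, rfl⟩

theorem adjoin_gH_xH_yH (p : ℕ) : Algebra.adjoin k {gH k p, xH k p, yH k p} = ⊤ := by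
  let mk : FreeAlgebra k (Fin 3) →ₐ[k] H k p := RingQuot.mkAlgHom k (rel k p)
  have hsurj : mk.range = ⊤ := (AlgHom.range_eq_top _).mpr (RingQuot.mkAlgHom_surjective k _)
  rw [eq_top_iff, ← hsurj, ← Algebra.map_top, ← FreeAlgebra.adjoin_range_ι,
    AlgHom.map_adjoin]
  refine Algebra.adjoin_mono ?_
  rintro _ ⟨_, ⟨i, rfl⟩, rfl⟩
  change mk (FreeAlgebra.ι k i) ∈ ({mk (G k), mk (X k), mk (Y k)} : Set (H k p))
  fin_cases i <;> simp [X, Y, G]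

namespace JordanModel

variable {k} {p : ℕ}

abbrev V (k : Type*) [Field k] (p : ℕ) := (ZMod p × Fin p × Fin p) →₀ k

local notation "End𝕍" => Module.End k (V k p)

-- extended by zero to all `j, l : ℕ`, so that the operators below act on `vec` without
-- case splits
def vec (i : ZMod p) (j l : ℕ) : V k p :=
  if h : j < p ∧ l < p then Finsupp.single (i, ⟨j, h.1⟩, ⟨l, h.2⟩) 1 else 0

lemma vec_eq_zero {i : ZMod p} {j l : ℕ} (h : p ≤ j ∨ p ≤ l) : (vec i j l : V k p) = 0 :=
  dif_neg (by omega)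

lemma vec_val (m : ZMod p × Fin p × Fin p) : (vec m.1 m.2.1 m.2.2 : V k p) = Finsupp.single m 1 :=
  dif_pos ⟨m.2.1.isLt, m.2.2.isLt⟩

lemma ext_vec {f f' : End𝕍} (h : ∀ i j l, f (vec i j l) = f' (vec i j l)) :
    f = f' :=
  Finsupp.basisSingleOne.ext fun m => by simpa [vec_val] using h m.1 m.2.1 m.2.2

def ofVec (F : ZMod p → ℕ → ℕ → V k p) : End𝕍 :=
  Finsupp.linearCombination k fun m => F m.1 m.2.1 m.2.2

lemma ofVec_vec {F : ZMod p → ℕ → ℕ → V k p}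
    (hF : ∀ i j l, p ≤ j ∨ p ≤ l → F i j l = 0) (i : ZMod p) (j l : ℕ) :
    ofVec F (vec i j l) = F i j l := by
  by_cases h : j < p ∧ l < p
  · rw [vec, dif_pos h, ofVec, Finsupp.linearCombination_single, one_smul]
  · rw [vec_eq_zero (by omega), map_zero, hF i j l (by omega)]

def gOp : End𝕍 := ofVec fun i j l => vec (i + 1) j l

def shiftJ (w : ZMod p → ℕ → k) : End𝕍 := ofVec fun i j l => w i j • vec i (j + 1) l

def shiftL : End𝕍 := ofVec fun i j l => vec i j (l + 1)

lemma gOp_vec (i : ZMod p) (j l : ℕ) : (gOp : End𝕍) (vec i j l) = vec (i + 1) j l :=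
  ofVec_vec (fun _ _ _ h => vec_eq_zero h) i j l

lemma shiftJ_vec (w : ZMod p → ℕ → k) (i : ZMod p) (j l : ℕ) :
    shiftJ w (vec i j l) = w i j • vec i (j + 1) l :=
  ofVec_vec (fun _ _ _ h => by rw [vec_eq_zero (by omega), smul_zero]) i j l

lemma shiftL_vec (i : ZMod p) (j l : ℕ) : (shiftL : End𝕍) (vec i j l) = vec i j (l + 1) :=
  ofVec_vec (fun _ _ _ h => vec_eq_zero (by omega)) i j l

lemma gOp_pow_vec (n : ℕ) (i : ZMod p) (j l : ℕ) :
    ((gOp : End𝕍) ^ n) (vec i j l) = vec (i + (n : ZMod p)) j l := by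
  induction n with
  | zero => simp
  | succ n ih => rw [pow_succ', Module.End.mul_apply, ih, gOp_vec, Nat.cast_succ, add_assoc]

lemma shiftJ_pow_vec (w : ZMod p → ℕ → k) (n : ℕ) (i : ZMod p) (j l : ℕ) :
    (shiftJ w ^ n) (vec i j l) = (∏ r ∈ Finset.range n, w i (j + r)) • vec i (j + n) l := by
  induction n generalizing j with
  | zero => simp
  | succ n ih =>
    rw [pow_succ, Module.End.mul_apply, shiftJ_vec, map_smul, ih, smul_smul,
      Finset.prod_range_succ', add_zero, mul_comm]
    simp only [add_assoc, add_comm 1]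

lemma shiftL_pow_vec (n : ℕ) (i : ZMod p) (j l : ℕ) :
    ((shiftL : End𝕍) ^ n) (vec i j l) = vec i j (l + n) := by
  induction n with
  | zero => simp
  | succ n ih => rw [pow_succ', Module.End.mul_apply, ih, shiftL_vec, add_assoc]

lemma shiftJ_pow_eq_zero (w : ZMod p → ℕ → k) : shiftJ w ^ p = 0 :=
  ext_vec fun i j l => by rw [shiftJ_pow_vec, vec_eq_zero (by omega), smul_zero]; rfl

lemma shiftL_pow_eq_zero : (shiftL : End𝕍) ^ p = 0 :=
  ext_vec fun i j l => by rw [shiftL_pow_vec, vec_eq_zero (by omega)]; rfl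

lemma commute_shiftL_shiftJ (w : ZMod p → ℕ → k) : Commute shiftL (shiftJ w) :=
  ext_vec fun i j l => by simp only [Module.End.mul_apply, shiftJ_vec, shiftL_vec, map_smul]

def xOp : End𝕍 := shiftJ fun _ _ => 1

lemma xOp_vec (i : ZMod p) (j l : ℕ) : (xOp : End𝕍) (vec i j l) = vec i (j + 1) l := by
  rw [xOp, shiftJ_vec, one_smul]

lemma xOp_pow_vec (n : ℕ) (i : ZMod p) (j l : ℕ) :
    ((xOp : End𝕍) ^ n) (vec i j l) = vec i (j + n) l := by
  rw [xOp, shiftJ_pow_vec, Finset.prod_const_one, one_smul]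

lemma linearIndependent_vec :
    LinearIndependent k fun m : Fin p × Fin p × Fin p =>
      (vec (m.1 : ℕ) m.2.1 m.2.2 : V k p) := by
  have hinj : Function.Injective
      fun m : Fin p × Fin p × Fin p => (((m.1 : ℕ) : ZMod p), m.2) := by
    rintro ⟨i, m⟩ ⟨i', m'⟩ h
    simp only [Prod.mk.injEq, ZMod.natCast_eq_natCast_iff', Nat.mod_eq_of_lt i.isLt,
      Nat.mod_eq_of_lt i'.isLt] at h
    rw [Fin.ext h.1, h.2]
  convert Finsupp.basisSingleOne.linearIndependent.comp _ hinj using 1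
  funext m
  exact vec_val (k := k) (((m.1 : ℕ) : ZMod p), m.2)

variable [CharP k p]

-- the coefficient `i + j/2` of `JordanRelations.y_mul_monomial`
def coeff (i : ZMod p) (j : ℕ) : k := ZMod.castHom (dvd_refl p) k i + j * 2⁻¹

lemma coeff_add_one_left (i : ZMod p) (j : ℕ) : coeff (k := k) (i + 1) j = coeff i j + 1 := by
  simp only [coeff, map_add, map_one]; ring

lemma coeff_add_one_right (i : ZMod p) (j : ℕ) :
    coeff (k := k) i (j + 1) = coeff i j + 2⁻¹ := by
  simp only [coeff, Nat.cast_succ]; ring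

def yOp : End𝕍 := shiftL - shiftJ coeff

lemma yOp_vec (i : ZMod p) (j l : ℕ) :
    (yOp : End𝕍) (vec i j l) = vec i j (l + 1) - (coeff i j : k) • vec i (j + 1) l := by
  rw [yOp, LinearMap.sub_apply, shiftL_vec, shiftJ_vec]

lemma yOp_pow_vec_zero (n : ℕ) : ((yOp : End𝕍) ^ n) (vec 0 0 0) = vec 0 0 n := by
  induction n with
  | zero => rfl
  | succ n ih =>
    rw [pow_succ', Module.End.mul_apply, ih, yOp_vec]
    simp [coeff]

lemma orderedMonomial_apply_vec_zero (m : Fin p × Fin p × Fin p) :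
    orderedMonomial p (gOp : End𝕍) xOp yOp m (vec 0 0 0) = vec (m.1 : ℕ) m.2.1 m.2.2 := by
  simp only [orderedMonomial, Module.End.mul_apply, yOp_pow_vec_zero, xOp_pow_vec, gOp_pow_vec,
    zero_add]

theorem jordanRelations [Fact p.Prime] : JordanRelations k p (gOp : End𝕍) xOp yOp where
  x_pow := shiftJ_pow_eq_zero _
  y_pow := by
    have : CharP End𝕍 p := charP_of_injective_algebraMap' k p
    have := sub_pow_char_of_commute (R := End𝕍) p (commute_shiftL_shiftJ coeff)
    rw [shiftL_pow_eq_zero, shiftJ_pow_eq_zero] at this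
    exact this.trans (sub_self 0)
  g_pow := ext_vec fun i j l => by rw [gOp_pow_vec, ZMod.natCast_self, add_zero]; rfl
  g_mul_x := ext_vec fun i j l => by simp only [Module.End.mul_apply, gOp_vec, xOp_vec]
  g_mul_y := ext_vec fun i j l => by
    simp only [Module.End.mul_apply, LinearMap.add_apply, gOp_vec, xOp_vec, yOp_vec, map_sub,
      map_smul, coeff_add_one_left]
    module
  y_mul_x := ext_vec fun i j l => by
    simp only [Module.End.mul_apply, LinearMap.sub_apply, LinearMap.smul_apply, pow_two, xOp_vec,
      yOp_vec, map_sub, map_smul, coeff_add_one_right]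
    module

end JordanModel

open JordanModel in
theorem linearIndependent_orderedMonomial_H (p : ℕ) [Fact p.Prime] [CharP k p] :
    LinearIndependent k (orderedMonomial p (gH k p) (xH k p) (yH k p)) := by
  let φ := (jordanRelations (k := k) (p := p)).lift
  refine LinearIndependent.of_comp (LinearMap.applyₗ (vec 0 0 0) ∘ₗ φ.toLinearMap) ?_
  convert linearIndependent_vec (k := k) (p := p) using 1
  funext m
  change φ (orderedMonomial p _ _ _ m) (vec 0 0 0) = _
  rw [map_orderedMonomial, JordanRelations.lift_gH, JordanRelations.lift_xH,
    JordanRelations.lift_yH, orderedMonomial_apply_vec_zero]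

end

theorem jordan_bosonization_basis_general
    (k : Type*) [Field k] (p : ℕ) (hp : p.Prime)
    [CharP k p] :
    LinearIndependent k
      (fun m : Fin p × Fin p × Fin p =>
        gH k p ^ (m.1 : ℕ) * xH k p ^ (m.2.1 : ℕ) * yH k p ^ (m.2.2 : ℕ)) ∧
    Submodule.span k
      (Set.range (fun m : Fin p × Fin p × Fin p =>
        gH k p ^ (m.1 : ℕ) * xH k p ^ (m.2.1 : ℕ) * yH k p ^ (m.2.2 : ℕ)))
      = ⊤ ∧
    Module.finrank k (H k p) = p ^ 3 := by
  have : Fact p.Prime := ⟨hp⟩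
  have hli := linearIndependent_orderedMonomial_H k p
  have hspan := (jordanRelations_H k p).span_orderedMonomial_eq_top (adjoin_gH_xH_yH k p)
  refine ⟨hli, hspan, ?_⟩
  rw [Module.finrank_eq_card_basis (Module.Basis.mk hli hspan.ge)]
  simp [pow_succ, mul_assoc]

/-- Let `k` be a field of odd prime characteristic `p` and
`H` the bosonization of the restricted Jordan plane.  The images of the
monomials `g^i x^j y^ℓ`, `0 ≤ i, j, ℓ ≤ p − 1`, form a `k`-basis of `H`; in
particular `dim_k H = p³`. -/
theorem jordan_bosonization_basis
    (k : Type*) [Field k] (p : ℕ) (hp : p.Prime) (hodd : Odd p)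
    [CharP k p] :
    LinearIndependent k
      (fun m : Fin p × Fin p × Fin p =>
        gH k p ^ (m.1 : ℕ) * xH k p ^ (m.2.1 : ℕ) * yH k p ^ (m.2.2 : ℕ)) ∧
    Submodule.span k
      (Set.range (fun m : Fin p × Fin p × Fin p =>
        gH k p ^ (m.1 : ℕ) * xH k p ^ (m.2.1 : ℕ) * yH k p ^ (m.2.2 : ℕ)))
      = ⊤ ∧
    Module.finrank k (H k p) = p ^ 3 :=
  jordan_bosonization_basis_general k p hp
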